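/- Let (b₁,b₂) ∈ B with b₃ = (b₁b₂)^(−1), and assume b₁ ≥ b₂ + 2b₃ and G(b₁,b₂,b₃) > 0 (so (b₁,b₂) lies in B_{III}, the existence region of the type-III Riemann ellipsoids). Then (x²−y²)·D(x,y,z) ≠ 0 both for (x,y,z) = (b₁,b₂,b₃) and for (x,y,z) = (b₂,b₁,b₃), and the four numbers G^R₊(b₁,b₂,b₃), G^R₋(b₁,b₂,b₃), G^R₊(b₂,b₁,b₃), G^R₋(b₂,b₁,b₃) are all nonnegative; consequently the quantities N^R₊(x,y,z) = ½(√(G^R₊(x,y,z)) + √(G^R₋(x,y,z))) and N^R₋(x,y,z) = ½(√(G^R₊(x,y,z)) − √(G^R₋(x,y,z))), which define the momenta of the type-III ellipsoids, are well-defined real numbers at both argument triples. -/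

import Mathlib

open Real MeasureTheory

/-- `C₁(x,y,z) = 2πg ∫₀^∞ s·((s+x²)(s+y²)(s+z²))^(−3/2) ds`. -/
noncomputable def riC1 (g x y z : ℝ) : ℝ :=
  2 * π * g * ∫ s in Set.Ioi (0:ℝ),
    s * ((s + x ^ 2) * (s + y ^ 2) * (s + z ^ 2)) ^ (-(3:ℝ)/2)

/-- `C₂(x,y,z) = 2πg ∫₀^∞ s²·((s+x²)(s+y²)(s+z²))^(−3/2) ds`. -/
noncomputable def riC2 (g x y z : ℝ) : ℝ :=
  2 * π * g * ∫ s in Set.Ioi (0:ℝ),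
    s ^ 2 * ((s + x ^ 2) * (s + y ^ 2) * (s + z ^ 2)) ^ (-(3:ℝ)/2)

/-- `G(x,y,z) = x²(y²−z²)C₁ + (y²−4z²)(z²C₁ + C₂)`. -/
noncomputable def Gfun (g x y z : ℝ) : ℝ :=
  x ^ 2 * (y ^ 2 - z ^ 2) * riC1 g x y z
    + (y ^ 2 - 4 * z ^ 2) * (z ^ 2 * riC1 g x y z + riC2 g x y z)

/-- `D(x,y,z) = x²(y²−z²) + z²(4z²−y²)`. -/
def Dfun (x y z : ℝ) : ℝ := x ^ 2 * (y ^ 2 - z ^ 2) + z ^ 2 * (4 * z ^ 2 - y ^ 2)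

/-- `G^R₊(x,y,z)`. -/
noncomputable def GRp (g x y z : ℝ) : ℝ :=
  (y - z) ^ 4 * (x ^ 2 - (y + 2 * z) ^ 2) *
    ((x ^ 2 - z ^ 2) * Gfun g x y z) / ((x ^ 2 - y ^ 2) * Dfun x y z)

/-- `G^R₋(x,y,z)`. -/
noncomputable def GRm (g x y z : ℝ) : ℝ :=
  (y + z) ^ 4 * (x ^ 2 - (y - 2 * z) ^ 2) *
    ((x ^ 2 - z ^ 2) * Gfun g x y z) / ((x ^ 2 - y ^ 2) * Dfun x y z)

/-- `N^R₊(x,y,z) = ½(√G^R₊ + √G^R₋)`. -/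
noncomputable def NRp (g x y z : ℝ) : ℝ :=
  (Real.sqrt (GRp g x y z) + Real.sqrt (GRm g x y z)) / 2

/-- `N^R₋(x,y,z) = ½(√G^R₊ − √G^R₋)`. -/
noncomputable def NRm (g x y z : ℝ) : ℝ :=
  (Real.sqrt (GRp g x y z) - Real.sqrt (GRm g x y z)) / 2

/-- Membership in `B = {(b₁,b₂) : b₁ > b₂ > b₁^(−1/2) > 0}`. -/
def memB (b1 b2 : ℝ) : Prop := b2 < b1 ∧ (Real.sqrt b1)⁻¹ < b2 ∧ 0 < (Real.sqrt b1)⁻¹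

/-!
On `B` one has `b₁b₂² > 1`, i.e. `0 < b₃ < b₂ < b₁`. Then `D(x,y,z) = (x²−z²)(y²−z²) + 3z⁴` is
positive at both triples, while `x² − y²` changes sign under the swap. The factors
`x² − (y ± 2z)²` change sign together with it, because `b₁ ≥ b₂ + 2b₃`. Finally `G(b₁,b₂,b₃) > 0`
is assumed, and `G(b₂,b₁,b₃) ≥ 0` because `C₁, C₂ ≥ 0` and `b₁ ≥ 2b₃`.
-/

lemma riC1_nonneg {g : ℝ} (hg : 0 ≤ g) (x y z : ℝ) : 0 ≤ riC1 g x y z := by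
  refine mul_nonneg (by positivity) (setIntegral_nonneg measurableSet_Ioi fun s hs => ?_)
  have hs : (0 : ℝ) ≤ s := le_of_lt hs
  positivity

lemma riC2_nonneg {g : ℝ} (hg : 0 ≤ g) (x y z : ℝ) : 0 ≤ riC2 g x y z := by
  refine mul_nonneg (by positivity) (setIntegral_nonneg measurableSet_Ioi fun s hs => ?_)
  have hs : (0 : ℝ) ≤ s := le_of_lt hs
  positivity

lemma Gfun_nonneg {g x y z : ℝ} (hg : 0 ≤ g) (h : 4 * z ^ 2 ≤ y ^ 2) : 0 ≤ Gfun g x y z := by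
  have := riC1_nonneg hg x y z
  have := riC2_nonneg hg x y z
  unfold Gfun
  have hyz : 0 ≤ y ^ 2 - z ^ 2 := by nlinarith [sq_nonneg z]
  have hyz' : 0 ≤ y ^ 2 - 4 * z ^ 2 := by linarith
  positivity

lemma Dfun_eq (x y z : ℝ) : Dfun x y z = (x ^ 2 - z ^ 2) * (y ^ 2 - z ^ 2) + 3 * z ^ 4 := by
  unfold Dfun; ring

lemma Dfun_comm (x y z : ℝ) : Dfun x y z = Dfun y x z := by
  rw [Dfun_eq, Dfun_eq, mul_comm]

lemma Dfun_pos {x y z : ℝ} (hx : z ^ 2 < x ^ 2) (hy : z ^ 2 < y ^ 2) : 0 < Dfun x y z := by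
  rw [Dfun_eq]
  have := mul_pos (sub_pos.2 hx) (sub_pos.2 hy)
  positivity

/-- The common shape of `G^R₊` and `G^R₋`. -/
lemma mul_mul_div_mul_nonneg {p a e G d D : ℝ} (hp : 0 ≤ p) (he : 0 ≤ e) (hG : 0 ≤ G)
    (hD : 0 < D) (had : 0 ≤ a * d) : 0 ≤ p * a * (e * G) / (d * D) := by
  have : p * a * (e * G) / (d * D) = p * (e * G) / D * (a / d) := by
    rw [div_mul_div_comm]; ring
  rw [this]
  exact mul_nonneg (div_nonneg (by positivity) hD.le) (div_nonneg_iff.2 (mul_nonneg_iff.1 had))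

lemma GRp_nonneg {g x y z : ℝ} (hG : 0 ≤ Gfun g x y z) (hD : 0 < Dfun x y z)
    (hzx : z ^ 2 ≤ x ^ 2) (h : 0 ≤ (x ^ 2 - (y + 2 * z) ^ 2) * (x ^ 2 - y ^ 2)) :
    0 ≤ GRp g x y z :=
  mul_mul_div_mul_nonneg (by positivity) (sub_nonneg.2 hzx) hG hD h

lemma GRm_nonneg {g x y z : ℝ} (hG : 0 ≤ Gfun g x y z) (hD : 0 < Dfun x y z)
    (hzx : z ^ 2 ≤ x ^ 2) (h : 0 ≤ (x ^ 2 - (y - 2 * z) ^ 2) * (x ^ 2 - y ^ 2)) :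
    0 ≤ GRm g x y z :=
  mul_mul_div_mul_nonneg (by positivity) (sub_nonneg.2 hzx) hG hD h

namespace memB

variable {b1 b2 : ℝ}

lemma pos_left (h : memB b1 b2) : 0 < b1 :=
  Real.sqrt_pos.1 (inv_pos.1 h.2.2)

lemma pos_right (h : memB b1 b2) : 0 < b2 :=
  h.2.2.trans h.2.1

lemma inv_mul_lt (h : memB b1 b2) : (b1 * b2)⁻¹ < b2 := by
  have hs := h.2.2
  have hsb : 1 < b2 * √b1 := by
    have := mul_lt_mul_of_pos_right h.2.1 (inv_pos.1 hs)
    rwa [inv_mul_cancel₀ (inv_pos.1 hs).ne'] at this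
  rw [inv_lt_iff_one_lt_mul₀ (mul_pos h.pos_left h.pos_right)]
  calc 1 < (b2 * √b1) ^ 2 := by nlinarith
    _ = b2 * (b1 * b2) := by rw [mul_pow, sq_sqrt h.pos_left.le]; ring

end memB

/-- On the existence region `B_{III}` (`b₁ ≥ b₂ + 2b₃` and
`G(b₁,b₂,b₃) > 0`), the denominators `(x²−y²)D(x,y,z)` are nonzero and `G^R₊`, `G^R₋` are
nonnegative at the triples `(b₁,b₂,b₃)` and `(b₂,b₁,b₃)`, so the momenta `N^R±` of the
type-III ellipsoids are well defined. -/
theorem stmt_12 (g b1 b2 b3 : ℝ) (hg : 0 < g) (hB : memB b1 b2) (hb3 : b3 = (b1 * b2)⁻¹)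
    (hIII : b2 + 2 * b3 ≤ b1) (hG : 0 < Gfun g b1 b2 b3) :
    (b1 ^ 2 - b2 ^ 2) * Dfun b1 b2 b3 ≠ 0 ∧
    (b2 ^ 2 - b1 ^ 2) * Dfun b2 b1 b3 ≠ 0 ∧
    0 ≤ GRp g b1 b2 b3 ∧ 0 ≤ GRm g b1 b2 b3 ∧
    0 ≤ GRp g b2 b1 b3 ∧ 0 ≤ GRm g b2 b1 b3 ∧
    Real.sqrt (GRp g b1 b2 b3) ^ 2 = GRp g b1 b2 b3 ∧
    Real.sqrt (GRm g b1 b2 b3) ^ 2 = GRm g b1 b2 b3 ∧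
    Real.sqrt (GRp g b2 b1 b3) ^ 2 = GRp g b2 b1 b3 ∧
    Real.sqrt (GRm g b2 b1 b3) ^ 2 = GRm g b2 b1 b3 := by
  have hb2 := hB.pos_right
  have hb3pos : 0 < b3 := hb3 ▸ inv_pos.2 (mul_pos hB.pos_left hb2)
  have hb32 : b3 < b2 := hb3 ▸ hB.inv_mul_lt
  have h12 : 0 < b1 ^ 2 - b2 ^ 2 := by nlinarith [hB.1]
  have hD : 0 < Dfun b1 b2 b3 := Dfun_pos (by nlinarith) (by nlinarith)
  have hD' : 0 < Dfun b2 b1 b3 := Dfun_comm b1 b2 b3 ▸ hD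
  have hG' : 0 ≤ Gfun g b2 b1 b3 := Gfun_nonneg hg.le (by nlinarith)
  have hp1 := GRp_nonneg hG.le hD (by nlinarith) (mul_nonneg (by nlinarith) h12.le)
  have hm1 := GRm_nonneg hG.le hD (by nlinarith) (mul_nonneg (by nlinarith) h12.le)
  have hp2 := GRp_nonneg hG' hD' (by nlinarith)
    (mul_nonneg_of_nonpos_of_nonpos (by nlinarith) (by linarith))
  have hm2 := GRm_nonneg hG' hD' (by nlinarith)
    (mul_nonneg_of_nonpos_of_nonpos (by nlinarith) (by linarith))
  exact ⟨(mul_pos h12 hD).ne', (mul_neg_of_neg_of_pos (by linarith) hD').ne, hp1, hm1, hp2, hm2,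
    sq_sqrt hp1, sq_sqrt hm1, sq_sqrt hp2, sq_sqrt hm2⟩
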